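/- Let P̄ be a real symmetric N×N matrix with eigenvalues λ_1 ≥ ⋯ ≥ λ_N satisfying λ_K > λ_{K+1} for some 1 ≤ K < N, and let V ∈ St(N,K) be a matrix whose columns are orthonormal eigenvectors of P̄ corresponding to λ_1, …, λ_K. Then for every U ∈ St(N,K), ‖P̄ − V Vᵀ‖_F ≤ ‖P̄ − U Uᵀ‖_F, with equality if and only if U Uᵀ = V Vᵀ. -/

import Mathlib

open Matrix

/-- The Frobenius norm of a real matrix. -/
noncomputable def frobeniusNorm {N : ℕ} (M : Matrix (Fin N) (Fin N) ℝ) : ℝ :=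
  Real.sqrt (∑ i, ∑ j, (M i j) ^ 2)

lemma frob_sq {N K : ℕ} (M : Matrix (Fin N) (Fin K) ℝ) :
    ∑ i, ∑ j, (M i j)^2 = (Mᵀ * M).trace := by
  rw [Matrix.trace]
  simp only [Matrix.diag, Matrix.mul_apply, Matrix.transpose_apply]
  rw [Finset.sum_comm]
  simp [sq]

lemma frob_expand {N K : ℕ} (P : Matrix (Fin N) (Fin N) ℝ) (hPsym : Pᵀ = P)
    (X : Matrix (Fin N) (Fin K) ℝ) (hX : Xᵀ * X = 1) :
    ∑ i, ∑ j, ((P - X * Xᵀ) i j)^2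
      = (Pᵀ * P).trace - 2 * (P * (X * Xᵀ)).trace + K := by
  rw [frob_sq]
  have e : (P - X*Xᵀ)ᵀ * (P - X*Xᵀ)
      = Pᵀ*P - Pᵀ*(X*Xᵀ) - (X*Xᵀ)*P + (X*Xᵀ)*(X*Xᵀ) := by
    rw [transpose_sub, transpose_mul, transpose_transpose]
    noncomm_ring
  rw [e, trace_add, trace_sub, trace_sub]
  have h1 : (Pᵀ*(X*Xᵀ)).trace = (P*(X*Xᵀ)).trace := by rw [hPsym]
  have h2 : ((X*Xᵀ)*P).trace = (P*(X*Xᵀ)).trace := trace_mul_comm _ _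
  have h3 : ((X*Xᵀ)*(X*Xᵀ)).trace = (K:ℝ) := by
    have e2 : (X*Xᵀ) * (X*Xᵀ) = X * ((Xᵀ*X) * Xᵀ) := by simp only [Matrix.mul_assoc]
    rw [e2, hX, Matrix.one_mul, trace_mul_comm, hX, trace_one]
    simp
  rw [h1, h2, h3]; ring

lemma chi_sum {N K : ℕ} (hKN : K ≤ N) :
    ∑ i : Fin N, (if (i:ℕ) < K then (1:ℝ) else 0) = K := by
  rw [Fin.sum_univ_eq_sum_range (fun n => if n < K then (1:ℝ) else 0) N]
  rw [← Finset.sum_filter]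
  have : (Finset.range N).filter (· < K) = Finset.range K := by
    ext n; simp; omega
  simp [this]

lemma kyfan_aux {N K : ℕ} (hK1 : 1 ≤ K) (hKN : K < N) (μ : Fin N → ℝ) (hanti : Antitone μ)
    (hgap : μ ⟨K, hKN⟩ < μ ⟨K - 1, Nat.lt_of_le_of_lt (Nat.sub_le K 1) hKN⟩)
    (t : Fin N → ℝ) (h0 : ∀ i, 0 ≤ t i) (h1 : ∀ i, t i ≤ 1)
    (hsum : ∑ i, t i = K) :
    ∑ i, μ i * t i ≤ ∑ i, μ i * (if (i:ℕ) < K then 1 else 0) ∧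
    (∑ i, μ i * t i = ∑ i, μ i * (if (i:ℕ) < K then 1 else 0) →
      ∀ i, t i = if (i:ℕ) < K then 1 else 0) := by
  set c := μ ⟨K, hKN⟩ with hc
  set χ : Fin N → ℝ := fun i => if (i:ℕ) < K then 1 else 0 with hχ
  have hlt : ∀ i : Fin N, (i:ℕ) < K → c < μ i := by
    intro i hi
    refine lt_of_lt_of_le hgap (hanti ?_)
    rw [Fin.le_def]; simp; omega
  have hge : ∀ i : Fin N, K ≤ (i:ℕ) → μ i ≤ c := by
    intro i hi
    exact hanti (by rw [Fin.le_def]; simpa using hi)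
  have key : ∀ i ∈ Finset.univ, (μ i - c) * (t i - χ i) ≤ 0 := by
    intro i _
    by_cases h : (i:ℕ) < K
    · have := hlt i h
      have := h1 i
      simp only [hχ, if_pos h]
      nlinarith
    · have := hge i (le_of_not_gt h)
      have := h0 i
      simp only [hχ, if_neg h]
      nlinarith
  have expand : ∑ i, (μ i - c) * (t i - χ i) = (∑ i, μ i * t i) - ∑ i, μ i * χ i := by
    have e1 : ∀ i, (μ i - c) * (t i - χ i)
        = μ i * t i - μ i * χ i - c * t i + c * χ i := by intro i; ring
    simp_rw [e1]
    rw [Finset.sum_add_distrib, Finset.sum_sub_distrib, Finset.sum_sub_distrib,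
      ← Finset.mul_sum, ← Finset.mul_sum, hsum, chi_sum hKN.le]
    ring
  constructor
  · have := Finset.sum_nonpos key
    rw [expand] at this
    linarith
  · intro heq
    have hzero : ∑ i, (μ i - c) * (t i - χ i) = 0 := by rw [expand, heq]; ring
    have hall := (Finset.sum_eq_zero_iff_of_nonpos key).mp hzero
    have htop : ∀ i : Fin N, (i:ℕ) < K → t i = 1 := by
      intro i hi
      have hg := hall i (Finset.mem_univ i)
      have := hlt i hi
      simp only [hχ, if_pos hi] at hg
      rcases mul_eq_zero.mp hg with h' | h'
      · linarith
      · linarith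
    have hnn : ∀ i ∈ Finset.univ, (0:ℝ) ≤ t i - χ i := by
      intro i _
      by_cases h : (i:ℕ) < K
      · simp [hχ, h, htop i h]
      · simp [hχ, h, h0 i]
    have hsz : ∑ i, (t i - χ i) = 0 := by
      rw [Finset.sum_sub_distrib, hsum, chi_sum hKN.le]; ring
    have := (Finset.sum_eq_zero_iff_of_nonneg hnn).mp hsz
    intro i
    have := this i (Finset.mem_univ i)
    simp only [hχ] at this ⊢
    linarith

lemma sum_indicator {N K : ℕ} (hKN : K ≤ N) (μ : Fin N → ℝ) :
    ∑ i : Fin N, μ i * (if (i:ℕ) < K then 1 else 0) = ∑ j : Fin K, μ (Fin.castLE hKN j) := by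
  simp_rw [mul_ite, mul_one, mul_zero]
  rw [← Finset.sum_filter]
  have h : Finset.univ.filter (fun i : Fin N => (i:ℕ) < K)
      = Finset.univ.map (Fin.castLEEmb hKN) := by
    ext i
    simp only [Finset.mem_filter, Finset.mem_univ, true_and, Finset.mem_map,
      Fin.castLEEmb_apply]
    constructor
    · intro hi; exact ⟨⟨(i:ℕ), hi⟩, by ext; rfl⟩
    · rintro ⟨j, -, rfl⟩; exact j.isLt
  rw [h, Finset.sum_map]
  rfl

lemma proj_diag {N : ℕ} (M : Matrix (Fin N) (Fin N) ℝ) (hsym : Mᵀ = M) (hid : M * M = M)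
    (h01 : ∀ i, M i i = 0 ∨ M i i = 1) :
    M = diagonal (fun i => M i i) := by
  have hsym' : ∀ i j, M j i = M i j := by
    intro i j
    conv_lhs => rw [← hsym]
    rfl
  ext i k
  rw [diagonal_apply]
  by_cases h : i = k
  · subst h; simp
  · rw [if_neg h]
    have hrow : ∑ j, (M i j)^2 = M i i := by
      conv_rhs => rw [← hid]
      rw [mul_apply]
      congr 1; ext j; rw [hsym' i j]; ring
    have hMii : (M i i)^2 = M i i := by rcases h01 i with h' | h' <;> rw [h'] <;> ring
    have hsplit : ∑ j ∈ Finset.univ.erase i, (M i j)^2 = 0 := by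
      have h2 : (M i i)^2 + ∑ j ∈ Finset.univ.erase i, (M i j)^2 = M i i := by
        rw [Finset.add_sum_erase Finset.univ (fun j => (M i j)^2) (Finset.mem_univ i)]
        exact hrow
      linarith [h2, hMii]
    have := (Finset.sum_eq_zero_iff_of_nonneg (fun j _ => sq_nonneg (M i j))).mp hsplit
    have hk := this k (Finset.mem_erase.mpr ⟨fun hh => h hh.symm, Finset.mem_univ k⟩)
    exact pow_eq_zero_iff (by norm_num) |>.mp hk

lemma kyfan_matrix {N K : ℕ} (hK1 : 1 ≤ K) (hKN : K < N)
    (P : Matrix (Fin N) (Fin N) ℝ) (hP : P.IsHermitian)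
    (μ : Fin N → ℝ) (hanti : Antitone μ)
    (σ : Equiv.Perm (Fin N)) (hσ : μ = hP.eigenvalues ∘ σ)
    (hgap : μ ⟨K, hKN⟩ < μ ⟨K - 1, Nat.lt_of_le_of_lt (Nat.sub_le K 1) hKN⟩)
    (U : Matrix (Fin N) (Fin K) ℝ) (hU : Uᵀ * U = 1) :
    (P * (U * Uᵀ)).trace ≤ ∑ j : Fin K, μ (Fin.castLE hKN.le j) ∧
    ((P * (U * Uᵀ)).trace = ∑ j : Fin K, μ (Fin.castLE hKN.le j) →
      U * Uᵀ = (hP.eigenvectorUnitary : Matrix (Fin N) (Fin N) ℝ) *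
        diagonal (fun i => if ((σ.symm i : Fin N) : ℕ) < K then (1:ℝ) else 0) *
        (hP.eigenvectorUnitary : Matrix (Fin N) (Fin N) ℝ)ᵀ) := by
  set Q : Matrix (Fin N) (Fin N) ℝ := (hP.eigenvectorUnitary : Matrix (Fin N) (Fin N) ℝ)
    with hQdef
  have hst : star Q = Qᵀ := by ext i j; simp [Matrix.star_apply, hQdef]
  have hQ1 : Qᵀ * Q = 1 := by
    have := Unitary.coe_star_mul_self hP.eigenvectorUnitary; rwa [hst] at this
  have hQ2 : Q * Qᵀ = 1 := by
    have := Unitary.coe_mul_star_self hP.eigenvectorUnitary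
    rw [Unitary.coe_star] at this; rwa [hst] at this
  have hspec : P = Q * diagonal hP.eigenvalues * Qᵀ := by
    simpa [Matrix.star_eq_conjTranspose] using hP.spectral_theorem
  set W : Matrix (Fin N) (Fin K) ℝ := Qᵀ * U with hWdef
  have hWT : Wᵀ = Uᵀ * Q := by rw [hWdef, transpose_mul, transpose_transpose]
  have hW1 : Wᵀ * W = 1 := by
    rw [hWdef, hWT, Matrix.mul_assoc, ← Matrix.mul_assoc Q Qᵀ U, hQ2, Matrix.one_mul, hU]
  set M : Matrix (Fin N) (Fin N) ℝ := W * Wᵀ with hMdef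
  have hMsym : Mᵀ = M := by rw [hMdef, transpose_mul, transpose_transpose]
  have hMid : M * M = M := by
    rw [hMdef, Matrix.mul_assoc, ← Matrix.mul_assoc Wᵀ W Wᵀ, hW1, Matrix.one_mul]
  have hdiag : ∀ i, M i i = ∑ j, (W i j)^2 := by
    intro i; rw [hMdef, mul_apply]
    congr 1; ext j; rw [transpose_apply]; ring
  have h0 : ∀ i, 0 ≤ M i i := fun i => by
    rw [hdiag]; positivity
  have h1 : ∀ i, M i i ≤ 1 := by
    intro i
    have h2 : M i i = ∑ k, (M i k)^2 := by
      conv_lhs => rw [← hMid]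
      rw [mul_apply]
      congr 1; ext k
      have hki : M k i = M i k := by
        have h5 := congrFun (congrFun hMsym k) i
        simpa using h5.symm
      rw [hki]; ring
    have h3 : (M i i)^2 ≤ ∑ k, (M i k)^2 :=
      Finset.single_le_sum (f := fun k => (M i k)^2) (fun k _ => sq_nonneg _) (Finset.mem_univ i)
    nlinarith [h0 i]
  have hsumM : ∑ i, M i i = K := by
    have h4 : M.trace = (Wᵀ * W).trace := trace_mul_comm W Wᵀ
    rw [hW1, trace_one] at h4
    simpa [Matrix.trace, Matrix.diag] using h4
  have htr : (P * (U * Uᵀ)).trace = ∑ i, hP.eigenvalues i * M i i := by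
    have hM2 : Qᵀ * ((U * Uᵀ) * Q) = M := by
      rw [hMdef, hWdef, hWT]
      simp only [Matrix.mul_assoc]
    calc (P * (U * Uᵀ)).trace
        = (Q * (diagonal hP.eigenvalues * (Qᵀ * (U * Uᵀ)))).trace := by
          conv_lhs => rw [hspec]
          simp only [Matrix.mul_assoc]
      _ = ((diagonal hP.eigenvalues * (Qᵀ * (U * Uᵀ))) * Q).trace := trace_mul_comm _ _
      _ = (diagonal hP.eigenvalues * M).trace := by
          rw [← hM2]; simp only [Matrix.mul_assoc]
      _ = ∑ i, hP.eigenvalues i * M i i := by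
          simp [Matrix.trace, Matrix.diag, Matrix.diagonal_mul]
  set t : Fin N → ℝ := fun i => M (σ i) (σ i) with htdef
  have hre : ∑ i, hP.eigenvalues i * M i i = ∑ i, μ i * t i := by
    rw [hσ]
    exact (Equiv.sum_comp σ (fun i => hP.eigenvalues i * M i i)).symm
  have hsumt : ∑ i, t i = K := by
    rw [htdef]
    rw [Equiv.sum_comp σ (fun i => M i i)]
    exact hsumM
  obtain ⟨hle, heqc⟩ := kyfan_aux hK1 hKN μ hanti hgap t (fun i => h0 _) (fun i => h1 _) hsumt
  rw [sum_indicator hKN.le μ] at hle heqc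
  constructor
  · rw [htr, hre]; exact hle
  · intro heq
    rw [htr, hre] at heq
    have hchi := heqc heq
    have hMjj : ∀ j, M j j = if ((σ.symm j : Fin N) : ℕ) < K then (1:ℝ) else 0 := by
      intro j
      have := hchi (σ.symm j)
      rw [htdef] at this
      simpa using this
    have h01 : ∀ j, M j j = 0 ∨ M j j = 1 := by
      intro j; rw [hMjj j]
      by_cases h : ((σ.symm j : Fin N) : ℕ) < K
      · right; rw [if_pos h]
      · left; rw [if_neg h]
    have hMd : M = diagonal (fun i => if ((σ.symm i : Fin N) : ℕ) < K then (1:ℝ) else 0) :=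
      calc M = diagonal (fun i => M i i) := proj_diag M hMsym hMid h01
        _ = _ := congrArg diagonal (funext hMjj)
    have hQW : Q * W = U := by
      rw [hWdef, ← Matrix.mul_assoc, hQ2, Matrix.one_mul]
    calc U * Uᵀ = (Q * W) * (Q * W)ᵀ := by rw [hQW]
      _ = Q * M * Qᵀ := by
          rw [transpose_mul, hMdef]
          simp only [Matrix.mul_assoc]
      _ = _ := by rw [hMd]

theorem iam_solution (N K : ℕ) (hK1 : 1 ≤ K) (hKN : K < N)
    (P : Matrix (Fin N) (Fin N) ℝ) (hP : P.IsHermitian)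
    (μ : Fin N → ℝ) (hanti : Antitone μ)
    (hperm : ∃ σ : Equiv.Perm (Fin N), μ = hP.eigenvalues ∘ σ)
    (hgap : μ ⟨K, hKN⟩ < μ ⟨K - 1, by omega⟩)
    (V : Matrix (Fin N) (Fin K) ℝ) (hV : Vᵀ * V = 1)
    (heig : ∀ j : Fin K,
      P.mulVec (fun i => V i j) = μ (Fin.castLE hKN.le j) • (fun i => V i j)) :
    ∀ U : Matrix (Fin N) (Fin K) ℝ, Uᵀ * U = 1 →
      frobeniusNorm (P - V * Vᵀ) ≤ frobeniusNorm (P - U * Uᵀ) ∧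
      (frobeniusNorm (P - V * Vᵀ) = frobeniusNorm (P - U * Uᵀ) ↔ U * Uᵀ = V * Vᵀ) := by
  obtain ⟨σ, hσ⟩ := hperm
  have hPsym : Pᵀ = P := by
    calc Pᵀ = Pᴴ := by ext i j; simp [conjTranspose_apply]
      _ = P := hP
  intro U hU
  have hcol : ∀ j : Fin K, ∑ i, (V i j)^2 = 1 := by
    intro j
    have h := congrFun (congrFun hV j) j
    simp only [Matrix.mul_apply, Matrix.transpose_apply, Matrix.one_apply_eq] at h
    simpa [sq] using h
  have hPV : ∀ i (j : Fin K), (P * V) i j = μ (Fin.castLE hKN.le j) * V i j := by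
    intro i j
    have h := congrFun (heig j) i
    simpa [Matrix.mulVec, dotProduct, Matrix.mul_apply] using h
  have hVtr : (P * (V * Vᵀ)).trace = ∑ j : Fin K, μ (Fin.castLE hKN.le j) := by
    have e : (P * (V * Vᵀ)).trace = (Vᵀ * (P * V)).trace := by
      rw [← Matrix.mul_assoc, trace_mul_comm]
    rw [e, Matrix.trace]
    simp only [Matrix.diag]
    refine Finset.sum_congr rfl (fun j _ => ?_)
    rw [Matrix.mul_apply]
    have e2 : ∀ i, Vᵀ j i * (P*V) i j = μ (Fin.castLE hKN.le j) * (V i j)^2 := fun i => by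
      rw [transpose_apply, hPV i j]; ring
    rw [Finset.sum_congr rfl (fun i _ => e2 i), ← Finset.mul_sum, hcol j, mul_one]
  obtain ⟨hVle, hVeq⟩ := kyfan_matrix hK1 hKN P hP μ hanti σ hσ hgap V hV
  obtain ⟨hUle, hUeq⟩ := kyfan_matrix hK1 hKN P hP μ hanti σ hσ hgap U hU
  have hVproj := hVeq hVtr
  have htrUV : (P * (U * Uᵀ)).trace ≤ (P * (V * Vᵀ)).trace := by rw [hVtr]; exact hUle
  have hfV := frob_expand P hPsym V hV
  have hfU := frob_expand P hPsym U hU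
  have hfVle : ∑ i, ∑ j, ((P - V*Vᵀ) i j)^2 ≤ ∑ i, ∑ j, ((P - U*Uᵀ) i j)^2 := by
    rw [hfV, hfU]; linarith
  have hnnV : (0:ℝ) ≤ ∑ i, ∑ j, ((P - V*Vᵀ) i j)^2 := by positivity
  have hnnU : (0:ℝ) ≤ ∑ i, ∑ j, ((P - U*Uᵀ) i j)^2 := by positivity
  constructor
  · exact Real.sqrt_le_sqrt hfVle
  · constructor
    · intro heq
      have hsq : ∑ i, ∑ j, ((P - V*Vᵀ) i j)^2 = ∑ i, ∑ j, ((P - U*Uᵀ) i j)^2 := by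
        have h2 := congrArg (fun x => x^2) heq
        simp only [frobeniusNorm] at h2
        rwa [Real.sq_sqrt hnnV, Real.sq_sqrt hnnU] at h2
      have htreq : (P * (U * Uᵀ)).trace = ∑ j : Fin K, μ (Fin.castLE hKN.le j) := by
        rw [hfV, hfU, hVtr] at hsq
        linarith
      rw [hUeq htreq, hVproj]
    · intro heq
      unfold frobeniusNorm
      rw [heq]
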